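/- The quantities a_m(ξ₁,ξ₂,η₁,η₂) = tr(ε(ξ₁)ι(ξ₂)ε(η₁)ι(η₂)) on Λᵐ V* satisfy the recursion a_{m+1}(η₁,ξ₂,ξ₁,η₂) = a_m(ξ₁,ξ₂,η₁,η₂) + ⟨ξ₁,ξ₂⟩⟨η₁,η₂⟩(2A_{n,m} − C(n,m)), where A_{n,m} = Σ_{j=0}^{m}(−1)^j C(n,m−j). -/

import Mathlib

noncomputable section

open ExteriorAlgebra
open scoped RealInnerProductSpace

abbrev Vn (n : ℕ) := EuclideanSpace ℝ (Fin n)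

variable {n : ℕ}

def eps (ξ : Vn n) : ExteriorAlgebra ℝ (Vn n) →ₗ[ℝ] ExteriorAlgebra ℝ (Vn n) :=
  LinearMap.mulLeft ℝ (ExteriorAlgebra.ι ℝ ξ)

def iot (ξ : Vn n) : ExteriorAlgebra ℝ (Vn n) →ₗ[ℝ] ExteriorAlgebra ℝ (Vn n) :=
  CliffordAlgebra.contractLeft (Q := (0 : QuadraticForm ℝ (Vn n)))
    (innerSL ℝ ξ).toLinearMap

lemma eps_mem (ξ : Vn n) (m : ℕ) :
    ∀ x ∈ ⋀[ℝ]^m (Vn n), eps ξ x ∈ ⋀[ℝ]^(m+1) (Vn n) := by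
  intro x hx
  rw [exteriorPower, pow_succ']
  exact Submodule.mul_mem_mul ⟨ξ, rfl⟩ hx

lemma iot_zero_mem (ξ : Vn n) :
    ∀ x ∈ ⋀[ℝ]^0 (Vn n), iot ξ x = 0 := by
  intro x hx
  rw [exteriorPower, pow_zero, Submodule.one_eq_range] at hx
  obtain ⟨r, rfl⟩ := hx
  exact CliffordAlgebra.contractLeft_algebraMap
    (Q := (0 : QuadraticForm ℝ (Vn n))) (innerSL ℝ ξ).toLinearMap r

lemma iot_mem (ξ : Vn n) (m : ℕ) :
    ∀ x ∈ ⋀[ℝ]^(m+1) (Vn n), iot ξ x ∈ ⋀[ℝ]^m (Vn n) := by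
  induction m with
  | zero =>
    intro x hx
    rw [exteriorPower, pow_one] at hx
    obtain ⟨v, rfl⟩ := hx
    rw [iot, CliffordAlgebra.contractLeft_ι]
    exact Submodule.algebraMap_mem _
  | succ k ih =>
    intro x hx
    rw [exteriorPower, pow_succ'] at hx
    refine Submodule.mul_induction_on hx ?_ ?_
    · rintro a ⟨v, rfl⟩ b hb
      rw [iot, CliffordAlgebra.contractLeft_ι_mul]
      refine sub_mem (Submodule.smul_mem _ _ hb) ?_
      rw [exteriorPower, pow_succ']
      exact Submodule.mul_mem_mul ⟨v, rfl⟩ (ih b hb)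
    · intro x y hx hy
      rw [map_add]
      exact add_mem hx hy

/-- `S(ξ) = ε(ξ)ι(ξ) − ι(ξ)ε(ξ)`. -/
def SOp (ξ : Vn n) : ExteriorAlgebra ℝ (Vn n) →ₗ[ℝ] ExteriorAlgebra ℝ (Vn n) :=
  eps ξ ∘ₗ iot ξ - iot ξ ∘ₗ eps ξ

lemma SOp_mem (ξ : Vn n) (m : ℕ) :
    ∀ x ∈ ⋀[ℝ]^m (Vn n), SOp ξ x ∈ ⋀[ℝ]^m (Vn n) := by
  intro x hx
  have h2 : iot ξ (eps ξ x) ∈ ⋀[ℝ]^m (Vn n) := iot_mem ξ m _ (eps_mem ξ m x hx)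
  have h1 : eps ξ (iot ξ x) ∈ ⋀[ℝ]^m (Vn n) := by
    match m with
    | 0 => rw [iot_zero_mem ξ x hx, map_zero]; exact Submodule.zero_mem _
    | k+1 => exact eps_mem ξ k _ (iot_mem ξ k x hx)
  simpa [SOp, LinearMap.sub_apply, LinearMap.comp_apply] using sub_mem h1 h2

/-- `S(ξ)` restricted to `m`-forms. -/
def SRes (ξ : Vn n) (m : ℕ) : ⋀[ℝ]^m (Vn n) →ₗ[ℝ] ⋀[ℝ]^m (Vn n) :=
  (SOp ξ).restrict (SOp_mem ξ m)

/-- The leading symbol `σ(ξ) = |ξ|⁻²(ε(ξ)ι(ξ) − ι(ξ)ε(ξ))`. -/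
def sigmaOp (ξ : Vn n) : ExteriorAlgebra ℝ (Vn n) →ₗ[ℝ] ExteriorAlgebra ℝ (Vn n) :=
  (‖ξ‖ ^ 2)⁻¹ • SOp ξ

lemma sigmaOp_mem (ξ : Vn n) (m : ℕ) :
    ∀ x ∈ ⋀[ℝ]^m (Vn n), sigmaOp ξ x ∈ ⋀[ℝ]^m (Vn n) := by
  intro x hx
  simpa [sigmaOp] using Submodule.smul_mem _ _ (SOp_mem ξ m x hx)

/-- `σ(ξ)` restricted to `m`-forms. -/
def sigmaR (ξ : Vn n) (m : ℕ) : ⋀[ℝ]^m (Vn n) →ₗ[ℝ] ⋀[ℝ]^m (Vn n) :=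
  (sigmaOp ξ).restrict (sigmaOp_mem ξ m)

/-- `ε(ξ₁)ι(ξ₂)ε(η₁)ι(η₂)`. -/
def quad (ξ₁ ξ₂ η₁ η₂ : Vn n) : ExteriorAlgebra ℝ (Vn n) →ₗ[ℝ] ExteriorAlgebra ℝ (Vn n) :=
  eps ξ₁ ∘ₗ iot ξ₂ ∘ₗ eps η₁ ∘ₗ iot η₂

lemma quad_mem (ξ₁ ξ₂ η₁ η₂ : Vn n) (m : ℕ) :
    ∀ x ∈ ⋀[ℝ]^m (Vn n), quad ξ₁ ξ₂ η₁ η₂ x ∈ ⋀[ℝ]^m (Vn n) := by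
  intro x hx
  have hq : quad ξ₁ ξ₂ η₁ η₂ x = eps ξ₁ (iot ξ₂ (eps η₁ (iot η₂ x))) := rfl
  match m with
  | 0 =>
    rw [hq, iot_zero_mem η₂ x hx]
    simp only [map_zero]
    exact Submodule.zero_mem _
  | k+1 =>
    rw [hq]
    exact eps_mem _ k _ (iot_mem _ k _ (eps_mem _ k _ (iot_mem _ k x hx)))

/-- `ε(ξ₁)ι(ξ₂)ε(η₁)ι(η₂)` restricted to `m`-forms. -/
def quadR (ξ₁ ξ₂ η₁ η₂ : Vn n) (m : ℕ) : ⋀[ℝ]^m (Vn n) →ₗ[ℝ] ⋀[ℝ]^m (Vn n) :=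
  (quad ξ₁ ξ₂ η₁ η₂).restrict (quad_mem ξ₁ ξ₂ η₁ η₂ m)


/-!
Write the operator on `Λᵐ⁺¹` as `ε(η₁) ∘ [ι(ξ₂)ε(ξ₁)] ∘ ι(η₂)` and cycle the trace: it becomes the
trace on `Λᵐ` of `[ι(ξ₂)ε(ξ₁)] ∘ [ι(η₂)ε(η₁)]`. By the anticommutation relation each bracket is
`⟨·,·⟩ I − ε ι`, and expanding the product leaves `a_m` plus multiples of `tr(ε(ξ)ι(η))` on `Λᵐ`.
The same cycling shows `tr(ε(ξ)ι(η))|_{Λᵐ⁺¹} = ⟨ξ,η⟩ C(n,m) − tr(ε(ξ)ι(η))|_{Λᵐ}`, whence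
`tr(ε(ξ)ι(η))|_{Λᵐ} = ⟨ξ,η⟩ (C(n,m) − A_{n,m})`.
-/

theorem LinearMap.trace_smul_id_sub {R M : Type*} [CommRing R]
    [AddCommGroup M] [Module R M] [Module.Free R M] [Module.Finite R M] (a : R) (f : M →ₗ[R] M) :
    LinearMap.trace R M (a • LinearMap.id - f) = a * Module.finrank R M - LinearMap.trace R M f := by
  rw [map_sub, map_smul, LinearMap.trace_id, smul_eq_mul]

theorem LinearMap.trace_smul_id_sub_comp_smul_id_sub {R M : Type*} [CommRing R]
    [AddCommGroup M] [Module R M] [Module.Free R M] [Module.Finite R M]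
    (a b : R) (f g : M →ₗ[R] M) :
    LinearMap.trace R M ((a • LinearMap.id - f) ∘ₗ (b • LinearMap.id - g))
      = a * b * Module.finrank R M - a * LinearMap.trace R M g - b * LinearMap.trace R M f
        + LinearMap.trace R M (f ∘ₗ g) := by
  have hexpand : (a • LinearMap.id - f) ∘ₗ (b • LinearMap.id - g)
      = (a * b) • LinearMap.id - a • g - b • f + f ∘ₗ g := by
    ext x
    simp only [LinearMap.comp_apply, LinearMap.sub_apply, LinearMap.add_apply,
      LinearMap.smul_apply, LinearMap.id_apply, map_sub, map_smul]
    module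
  rw [hexpand, map_add, map_sub, map_sub, map_smul, map_smul, map_smul, LinearMap.trace_id]
  simp only [smul_eq_mul]

/-- `A_{n,m}`. -/
def altChooseSum (n m : ℕ) : ℝ := ∑ j ∈ Finset.range (m + 1), (-1 : ℝ) ^ j * (n.choose (m - j))

lemma altChooseSum_zero (n : ℕ) : altChooseSum n 0 = 1 := by
  simp [altChooseSum]

lemma altChooseSum_succ (n m : ℕ) :
    altChooseSum n (m + 1) = n.choose (m + 1) - altChooseSum n m := by
  rw [altChooseSum, altChooseSum, Finset.sum_range_succ', sub_eq_add_neg,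
    ← Finset.sum_neg_distrib, add_comm]
  simp only [Nat.add_sub_add_right, Nat.sub_zero, pow_zero, one_mul, pow_succ, mul_neg_one,
    neg_mul]

lemma finrank_exteriorPower_Vn (m : ℕ) : Module.finrank ℝ (⋀[ℝ]^m (Vn n)) = n.choose m := by
  rw [exteriorPower.finrank_eq, finrank_euclideanSpace_fin]

lemma iot_eps_apply (ξ η : Vn n) (x : ExteriorAlgebra ℝ (Vn n)) :
    iot ξ (eps η x) = ⟪ξ, η⟫ • x - eps η (iot ξ x) :=
  CliffordAlgebra.contractLeft_ι_mul _ _ _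

def epsR (ξ : Vn n) (m : ℕ) : ⋀[ℝ]^m (Vn n) →ₗ[ℝ] ⋀[ℝ]^(m + 1) (Vn n) :=
  (eps ξ).restrict (eps_mem ξ m)

def iotR (ξ : Vn n) (m : ℕ) : ⋀[ℝ]^(m + 1) (Vn n) →ₗ[ℝ] ⋀[ℝ]^m (Vn n) :=
  (iot ξ).restrict (iot_mem ξ m)

lemma eps_comp_iot_mem (ξ η : Vn n) (m : ℕ) :
    ∀ x ∈ ⋀[ℝ]^m (Vn n), (eps ξ ∘ₗ iot η) x ∈ ⋀[ℝ]^m (Vn n) := by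
  intro x hx
  cases m with
  | zero => simp [iot_zero_mem η x hx]
  | succ k => exact eps_mem ξ k _ (iot_mem η k x hx)

def epsIotR (ξ η : Vn n) (m : ℕ) : ⋀[ℝ]^m (Vn n) →ₗ[ℝ] ⋀[ℝ]^m (Vn n) :=
  (eps ξ ∘ₗ iot η).restrict (eps_comp_iot_mem ξ η m)

lemma epsIotR_zero (ξ η : Vn n) : epsIotR ξ η 0 = 0 := by
  refine LinearMap.ext fun x => Subtype.ext ?_
  show eps ξ (iot η x.1) = 0
  rw [iot_zero_mem η x.1 x.2, map_zero]

lemma epsIotR_succ (ξ η : Vn n) (m : ℕ) : epsIotR ξ η (m + 1) = epsR ξ m ∘ₗ iotR η m := rfl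

lemma quadR_eq_comp (ξ₁ ξ₂ η₁ η₂ : Vn n) (m : ℕ) :
    quadR ξ₁ ξ₂ η₁ η₂ m = epsIotR ξ₁ ξ₂ m ∘ₗ epsIotR η₁ η₂ m := rfl

lemma iotR_comp_epsR (ξ η : Vn n) (m : ℕ) :
    iotR ξ m ∘ₗ epsR η m = ⟪ξ, η⟫ • LinearMap.id - epsIotR η ξ m := by
  refine LinearMap.ext fun x => Subtype.ext ?_
  exact iot_eps_apply ξ η x.1

lemma trace_epsIotR (ξ η : Vn n) (m : ℕ) :
    LinearMap.trace ℝ (⋀[ℝ]^m (Vn n)) (epsIotR ξ η m)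
      = ⟪ξ, η⟫ * (n.choose m - altChooseSum n m) := by
  induction m with
  | zero => simp [epsIotR_zero, altChooseSum_zero]
  | succ k ih =>
    rw [epsIotR_succ, LinearMap.trace_comp_comm', iotR_comp_epsR,
      LinearMap.trace_smul_id_sub, finrank_exteriorPower_Vn, ih,
      altChooseSum_succ, real_inner_comm]
    ring

/-- the recursion
`a_{m+1}(η₁,ξ₂,ξ₁,η₂) = a_m(ξ₁,ξ₂,η₁,η₂) + ⟨ξ₁,ξ₂⟩⟨η₁,η₂⟩(2A_{n,m} − C(n,m))`
for `a_m(ξ₁,ξ₂,η₁,η₂) = tr(ε(ξ₁)ι(ξ₂)ε(η₁)ι(η₂))` on `Λᵐ`. -/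
theorem statement9 {n : ℕ} (m : ℕ) (ξ₁ ξ₂ η₁ η₂ : Vn n) :
    LinearMap.trace ℝ (⋀[ℝ]^(m + 1) (Vn n)) (quadR η₁ ξ₂ ξ₁ η₂ (m + 1))
      = LinearMap.trace ℝ (⋀[ℝ]^m (Vn n)) (quadR ξ₁ ξ₂ η₁ η₂ m)
        + ⟪ξ₁, ξ₂⟫ * ⟪η₁, η₂⟫ *
            (2 * (∑ j ∈ Finset.range (m + 1), (-1 : ℝ) ^ j * (n.choose (m - j)))
              - (n.choose m : ℝ)) := by
  have hcycle : LinearMap.trace ℝ (⋀[ℝ]^(m + 1) (Vn n)) (quadR η₁ ξ₂ ξ₁ η₂ (m + 1))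
      = LinearMap.trace ℝ (⋀[ℝ]^m (Vn n))
          ((iotR ξ₂ m ∘ₗ epsR ξ₁ m) ∘ₗ (iotR η₂ m ∘ₗ epsR η₁ m)) :=
    (LinearMap.trace_comp_comm' (epsR η₁ m) ((iotR ξ₂ m ∘ₗ epsR ξ₁ m) ∘ₗ iotR η₂ m)).symm
  rw [hcycle, iotR_comp_epsR, iotR_comp_epsR, LinearMap.trace_smul_id_sub_comp_smul_id_sub,
    ← quadR_eq_comp, finrank_exteriorPower_Vn, trace_epsIotR,
    trace_epsIotR, real_inner_comm ξ₂, real_inner_comm η₂]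
  unfold altChooseSum
  ring
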